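/- Let (X,d) be a geodesic metric space, f : X → (−∞, ∞] a function that is approximately convex at a point z ∈ X, and α ∈ ℝ with α ≥ f(z). Then the epigraph of f, as a subset of the product metric space X × ℝ (with metric d₂((x₁,λ₁),(x₂,λ₂)) = √(d(x₁,x₂)² + |λ₁−λ₂|²)), is uniformly approximable by geodesics (UAG) at the point (z, α): for every ε > 0 there exists R > 0 such that for any two distinct points p, p' in B((z,α), R) ∩ epi f there exist a curve g : [0,l] → epi f with g(0) = p, g(l) = p' and a geodesic γ : [0,l] → X × ℝ starting at p with d₂(γ(t), g(t))/t < ε for all t ∈ (0, l]. -/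

import Mathlib

/-- `γ` is a (unit-speed) geodesic of length `l`, i.e. an isometric embedding of `[0,l]`. -/
def IsGeodesic {X : Type*} [MetricSpace X] (γ : ℝ → X) (l : ℝ) : Prop :=
  ∀ s ∈ Set.Icc (0 : ℝ) l, ∀ t ∈ Set.Icc (0 : ℝ) l, dist (γ s) (γ t) = |s - t|

/-- `X` is a geodesic space: any two points are joined by a geodesic. -/
def GeodesicSpace (X : Type*) [MetricSpace X] : Prop :=
  ∀ x y : X, ∃ γ : ℝ → X, IsGeodesic γ (dist x y) ∧ γ 0 = x ∧ γ (dist x y) = y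

/-- `f : X → (-∞,∞]` is approximately convex at `z`. -/
def ApproxConvexAt {X : Type*} [MetricSpace X] (f : X → EReal) (z : X) : Prop :=
  ∀ ε > (0 : ℝ), ∃ r > (0 : ℝ), ∀ x ∈ Metric.ball z r, ∀ x' ∈ Metric.ball z r,
    ∀ l : ℝ, ∀ γ : ℝ → X, IsGeodesic γ l → γ 0 = x → γ l = x' →
      ∀ t ∈ Set.Icc (0 : ℝ) 1,
        f (γ (l * t)) ≤ ((1 - t : ℝ) : EReal) * f x + ((t : ℝ) : EReal) * f x' +
          ((ε * t * (1 - t) * dist x x' : ℝ) : EReal)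

/-- The epigraph of `f`, as a subset of the ℓ²-product `X × ℝ`. -/
def epiSet {X : Type*} [MetricSpace X] (f : X → EReal) : Set (WithLp 2 (X × ℝ)) :=
  {p | f (WithLp.equiv 2 (X × ℝ) p).1 ≤ (((WithLp.equiv 2 (X × ℝ) p).2 : ℝ) : EReal)}

private lemma distL2 {X : Type*} [MetricSpace X] (x y : WithLp 2 (X × ℝ)) :
    dist x y = Real.sqrt (dist x.fst y.fst ^ 2 + dist x.snd y.snd ^ 2) := by
  rw [WithLp.prod_dist_eq_add (p := 2) (by norm_num)]
  rw [Real.sqrt_eq_rpow]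
  have h2 : ((2:ENNReal).toReal) = ((2:ℕ):ℝ) := by norm_num
  rw [h2, Real.rpow_natCast, Real.rpow_natCast]
  norm_num

private lemma ereal_mul_le {c b : ℝ} (hc : 0 ≤ c) {a : EReal} (h : a ≤ (b : EReal)) :
    (c : EReal) * a ≤ ((c * b : ℝ) : EReal) := by
  induction a using EReal.rec with
  | bot =>
    rcases eq_or_lt_of_le hc with hc0 | hc0
    · simp [← hc0]
    · rw [EReal.coe_mul_bot_of_pos hc0]; exact bot_le
  | coe a =>
    rw [← EReal.coe_mul]
    exact_mod_cast mul_le_mul_of_nonneg_left (by exact_mod_cast h) hc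
  | top => exact absurd h (not_le.2 (EReal.coe_lt_top b))

/-- The epigraph of a function approximately convex at `z` is uniformly approximable
by geodesics (UAG) at `(z, α)` for any real `α ≥ f(z)`. -/
theorem epi_approxConvex_UAG {X : Type*} [MetricSpace X] (hX : GeodesicSpace X)
    (f : X → EReal) (z : X) (hf : ApproxConvexAt f z)
    (α : ℝ) (hα : f z ≤ (α : EReal)) :
    ∀ ε > (0 : ℝ), ∃ R > (0 : ℝ),
      ∀ p ∈ Metric.ball ((WithLp.equiv 2 (X × ℝ)).symm (z, α)) R ∩ epiSet f,
        ∀ p' ∈ Metric.ball ((WithLp.equiv 2 (X × ℝ)).symm (z, α)) R ∩ epiSet f,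
          p ≠ p' →
            ∃ l > (0 : ℝ), ∃ g γ : ℝ → WithLp 2 (X × ℝ),
              (∀ t ∈ Set.Icc (0 : ℝ) l, g t ∈ epiSet f) ∧ g 0 = p ∧ g l = p' ∧
                IsGeodesic γ l ∧ γ 0 = p ∧
                  ∀ t : ℝ, 0 < t → t ≤ l → dist (γ t) (g t) < ε * t := by
  intro ε hε
  obtain ⟨r, hr, hconv⟩ := hf (ε/2) (by linarith)
  refine ⟨r, hr, ?_⟩
  rintro p ⟨hpball, hpe⟩ p' ⟨hpball', hpe'⟩ hne
  -- notation
  set x : X := p.fst with hxdef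
  set lam : ℝ := p.snd with hlamdef
  set x' : X := p'.fst with hx'def
  set lam' : ℝ := p'.snd with hlam'def
  have hpe1 : f x ≤ (lam : EReal) := hpe
  have hpe2 : f x' ≤ (lam' : EReal) := hpe'
  -- the base points are in the ball of approximate convexity
  have hball : ∀ q : WithLp 2 (X × ℝ),
      q ∈ Metric.ball ((WithLp.equiv 2 (X × ℝ)).symm (z, α)) r → q.fst ∈ Metric.ball z r := by
    intro q hq
    rw [Metric.mem_ball] at hq ⊢
    refine lt_of_le_of_lt ?_ hq
    rw [distL2]
    calc dist q.fst z = Real.sqrt (dist q.fst z ^ 2) := (Real.sqrt_sq dist_nonneg).symm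
      _ ≤ _ := Real.sqrt_le_sqrt (le_add_of_nonneg_right (sq_nonneg _))
  have hx : x ∈ Metric.ball z r := hball p hpball
  have hx' : x' ∈ Metric.ball z r := hball p' hpball'
  set d : ℝ := dist x x' with hd
  set e : ℝ := lam' - lam with he
  set l : ℝ := dist p p' with hldef
  have hl : 0 < l := dist_pos.2 hne
  have hl2 : l ^ 2 = d ^ 2 + e ^ 2 := by
    have h := distL2 p p'
    rw [← hldef] at h
    have hnn : (0:ℝ) ≤ dist p.fst p'.fst ^ 2 + dist p.snd p'.snd ^ 2 := by positivity
    rw [h, Real.sq_sqrt hnn]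
    have : dist p.snd p'.snd = |lam - lam'| := Real.dist_eq _ _
    rw [this, sq_abs, he, hd]
    ring
  have hd0 : (0:ℝ) ≤ d := dist_nonneg
  have hd_le : d ≤ l := by nlinarith [sq_nonneg e]
  obtain ⟨σ, hσ, hσ0, hσd⟩ := hX x x'
  rw [← hd] at hσ hσd
  refine ⟨l, hl,
    fun t => (WithLp.equiv 2 (X × ℝ)).symm
      (σ (d * (t / l)), lam + e * (t / l) + ε / 2 * (t / l) * (1 - t / l) * d),
    fun t => (WithLp.equiv 2 (X × ℝ)).symm (σ (d * (t / l)), lam + e * (t / l)),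
    ?_, ?_, ?_, ?_, ?_, ?_⟩
  · -- g stays in the epigraph
    rintro t ⟨ht0, htl⟩
    set s : ℝ := t / l with hs
    have hs0 : 0 ≤ s := div_nonneg ht0 hl.le
    have hs1 : s ≤ 1 := (div_le_one hl).2 htl
    have key := hconv x hx x' hx' d σ hσ hσ0 hσd s ⟨hs0, hs1⟩
    show f (σ (d * s)) ≤ ((lam + e * s + ε / 2 * s * (1 - s) * d : ℝ) : EReal)
    refine key.trans ?_
    have h1 : ((1 - s : ℝ) : EReal) * f x ≤ (((1 - s) * lam : ℝ) : EReal) :=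
      ereal_mul_le (by linarith) hpe1
    have h2 : ((s : ℝ) : EReal) * f x' ≤ ((s * lam' : ℝ) : EReal) :=
      ereal_mul_le hs0 hpe2
    calc ((1 - s : ℝ) : EReal) * f x + ((s : ℝ) : EReal) * f x' +
          ((ε / 2 * s * (1 - s) * d : ℝ) : EReal)
        ≤ (((1 - s) * lam : ℝ) : EReal) + ((s * lam' : ℝ) : EReal) +
          ((ε / 2 * s * (1 - s) * d : ℝ) : EReal) :=
          add_le_add (add_le_add h1 h2) le_rfl
      _ = (((1 - s) * lam + s * lam' + ε / 2 * s * (1 - s) * d : ℝ) : EReal) := by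
          rw [← EReal.coe_add, ← EReal.coe_add]
      _ = ((lam + e * s + ε / 2 * s * (1 - s) * d : ℝ) : EReal) := by
          norm_cast; rw [he]; ring
  · -- g 0 = p
    show (WithLp.equiv 2 (X × ℝ)).symm
      (σ (d * (0 / l)), lam + e * (0 / l) + ε / 2 * (0 / l) * (1 - 0 / l) * d) = p
    have h1 : σ (d * (0 / l)) = x := by rw [zero_div, mul_zero, hσ0]
    have h2 : lam + e * (0 / l) + ε / 2 * (0 / l) * (1 - 0 / l) * d = lam := by
      rw [zero_div]; ring
    rw [h1, h2]
    rfl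
  · -- g l = p'
    show (WithLp.equiv 2 (X × ℝ)).symm
      (σ (d * (l / l)), lam + e * (l / l) + ε / 2 * (l / l) * (1 - l / l) * d) = p'
    have hll : l / l = 1 := div_self hl.ne'
    have h1 : σ (d * (l / l)) = x' := by rw [hll, mul_one, hσd]
    have h2 : lam + e * (l / l) + ε / 2 * (l / l) * (1 - l / l) * d = lam' := by
      rw [hll, he]; ring
    rw [h1, h2]
    rfl
  · -- γ is a geodesic
    rintro s ⟨hs0, hsl⟩ t ⟨ht0, htl⟩
    rw [distL2]
    simp only [WithLp.equiv_symm_apply, WithLp.toLp_fst, WithLp.toLp_snd]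
    have hmem : ∀ u : ℝ, 0 ≤ u → u ≤ l → d * (u / l) ∈ Set.Icc (0:ℝ) d := by
      intro u hu0 hul
      constructor
      · exact mul_nonneg hd0 (div_nonneg hu0 hl.le)
      · calc d * (u / l) ≤ d * 1 :=
              mul_le_mul_of_nonneg_left ((div_le_one hl).2 hul) hd0
          _ = d := mul_one d
    have h1 : dist (σ (d * (s / l))) (σ (d * (t / l))) = |d * (s / l) - d * (t / l)| :=
      hσ _ (hmem s hs0 hsl) _ (hmem t ht0 htl)
    have h2 : dist (lam + e * (s / l)) (lam + e * (t / l)) = |e * (s / l) - e * (t / l)| := by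
      rw [Real.dist_eq]; ring_nf
    rw [h1, h2, sq_abs, sq_abs]
    have hinner : (d * (s / l) - d * (t / l)) ^ 2 + (e * (s / l) - e * (t / l)) ^ 2
        = (s - t) ^ 2 := by
      have h3 : (d * (s / l) - d * (t / l)) ^ 2 + (e * (s / l) - e * (t / l)) ^ 2
          = (d ^ 2 + e ^ 2) * ((s - t) / l) ^ 2 := by ring
      rw [h3, ← hl2]
      field_simp
    rw [hinner, Real.sqrt_sq_eq_abs]
  · -- γ 0 = p
    show (WithLp.equiv 2 (X × ℝ)).symm (σ (d * (0 / l)), lam + e * (0 / l)) = p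
    have h1 : σ (d * (0 / l)) = x := by rw [zero_div, mul_zero, hσ0]
    have h2 : lam + e * (0 / l) = lam := by rw [zero_div]; ring
    rw [h1, h2]
    rfl
  · -- the approximation estimate
    intro t ht0 htl
    set s : ℝ := t / l with hs
    have hs0 : 0 < s := div_pos ht0 hl
    have hs1 : s ≤ 1 := (div_le_one hl).2 htl
    have hc0 : (0:ℝ) ≤ ε / 2 * s * (1 - s) * d := by
      have : (0:ℝ) ≤ 1 - s := by linarith
      positivity
    show dist ((WithLp.equiv 2 (X × ℝ)).symm (σ (d * s), lam + e * s))
        ((WithLp.equiv 2 (X × ℝ)).symm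
          (σ (d * s), lam + e * s + ε / 2 * s * (1 - s) * d)) < ε * t
    rw [distL2]
    simp only [WithLp.equiv_symm_apply, WithLp.toLp_fst, WithLp.toLp_snd]
    rw [dist_self]
    have h2 : dist (lam + e * s) (lam + e * s + ε / 2 * s * (1 - s) * d)
        = ε / 2 * s * (1 - s) * d := by
      rw [Real.dist_eq, abs_sub_comm]
      rw [abs_of_nonneg (by linarith)]
      ring
    rw [h2]
    have hsq : Real.sqrt (0 ^ 2 + (ε / 2 * s * (1 - s) * d) ^ 2)
        = ε / 2 * s * (1 - s) * d := by
      rw [zero_pow (by norm_num), zero_add, Real.sqrt_sq hc0]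
    rw [hsq]
    have hst : s * l = t := div_mul_cancel₀ t hl.ne'
    rw [← hst]
    have h₁ : s * (1 - s) * d ≤ s * d := by
      nlinarith [mul_nonneg (mul_nonneg hs0.le hs0.le) hd0]
    have h₂ : s * d ≤ s * l := mul_le_mul_of_nonneg_left hd_le hs0.le
    have h₃ : ε / 2 * (s * (1 - s) * d) ≤ ε / 2 * (s * l) :=
      mul_le_mul_of_nonneg_left (h₁.trans h₂) (by linarith)
    have h₄ : (0:ℝ) < ε / 2 * (s * l) := mul_pos (by linarith) (mul_pos hs0 hl)
    calc ε / 2 * s * (1 - s) * d = ε / 2 * (s * (1 - s) * d) := by ring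
      _ ≤ ε / 2 * (s * l) := h₃
      _ < ε * (s * l) := by linarith
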